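/- Let G be a group, let H ≤ G be a subgroup of finite bi-index in G, and let K ≤ G be a subgroup of finite index in G. Then H ∩ K has finite bi-index in K. -/

import Mathlib

open scoped Pointwise

/-- A subgroup `H ≤ G` has finite bi-index if the set of double cosets
`{HgH : g ∈ G}` is finite. -/
def FiniteBiIndex {G : Type*} [Group G] (H : Subgroup G) : Prop :=
  {S : Set G | ∃ g : G, S = (H : Set G) * {g} * (H : Set G)}.Finite

/-- The set of double cosets of a subgroup `H` of a group `M` with representatives in a
subgroup `G` of `M`; for `H ≤ G` this is the set of double cosets `H\G/H`. -/
def doubleCosets {M : Type*} [Group M] (G H : Subgroup M) : Set (Set M) :=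
  {S : Set M | ∃ g ∈ G, S = (H : Set M) * {g} * (H : Set M)}

/-- The pro-normal closure of a subgroup `H ≤ G`: the intersection of the subsets `HN`,
over all nontrivial normal subgroups `N` of `G`. -/
def pronormalClosure {G : Type*} [Group G] (H : Subgroup G) : Subgroup G where
  carrier := ⋂ N ∈ {N : Subgroup G | N.Normal ∧ N ≠ ⊥}, (H : Set G) * (N : Set G)
  one_mem' := by
    simp only [Set.mem_iInter]
    rintro N ⟨hN, -⟩
    exact ⟨1, H.one_mem, 1, N.one_mem, mul_one 1⟩
  mul_mem' := by
    intro a b ha hb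
    simp only [Set.mem_iInter] at ha hb ⊢
    rintro N hN
    obtain ⟨h₁, hh₁, n₁, hn₁, rfl⟩ := ha N hN
    obtain ⟨h₂, hh₂, n₂, hn₂, rfl⟩ := hb N hN
    refine ⟨h₁ * h₂, H.mul_mem hh₁ hh₂, (h₂⁻¹ * n₁ * h₂) * n₂, ?_, by group⟩
    refine N.mul_mem ?_ hn₂
    have := hN.1.conj_mem n₁ hn₁ h₂⁻¹
    simpa using this
  inv_mem' := by
    intro a ha
    simp only [Set.mem_iInter] at ha ⊢
    rintro N hN
    obtain ⟨h, hh, n, hn, rfl⟩ := ha N hN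
    refine ⟨h⁻¹, H.inv_mem hh, h * n⁻¹ * h⁻¹, hN.1.conj_mem n⁻¹ (N.inv_mem hn) h, by group⟩

/-- A subgroup `H ≤ G` is quasi-prodense if its pro-normal closure has finite index. -/
def QuasiProdense {G : Type*} [Group G] (H : Subgroup G) : Prop :=
  (pronormalClosure H).index ≠ 0

/-- `K` is a normal subgroup of the subgroup `H` (both subgroups of an ambient group). -/
def NormalIn {M : Type*} [Group M] (H K : Subgroup M) : Prop :=
  K ≤ H ∧ ∀ h ∈ H, ∀ k ∈ K, h * k * h⁻¹ ∈ K

/-- `K` is a subnormal subgroup of the subgroup `H`. -/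
def SubnormalIn {M : Type*} [Group M] (H K : Subgroup M) : Prop :=
  ∃ (m : ℕ) (c : ℕ → Subgroup M), c 0 = K ∧ c m = H ∧ ∀ i < m, NormalIn (c (i + 1)) (c i)

/-- The iterated derived subgroups of a subgroup. -/
def iterDerived {M : Type*} [Group M] (H : Subgroup M) : ℕ → Subgroup M
  | 0 => H
  | (k + 1) => ⁅iterDerived H k, iterDerived H k⁆

/-!
As `K` has finite index in `G`, `H ⊓ K` has finite index in `H`. A subgroup `L` with `L ⊓ H` of
finite index in `H` inherits finite bi-index from `H`: writing `a = r⁻¹ l₁` and `b = s l₂` with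
`r, s` coset representatives of `L ⊓ H` in `H` and `l₁, l₂ ∈ L`, the double coset `L (a g b) L`
equals `L (r⁻¹ g s) L`, so each `HgH` meets only finitely many `L`-double cosets.
-/

section

open DoubleCoset

variable {G : Type*} [Group G]

theorem doubleCoset_mul_mul_of_mem {L : Subgroup G} {l₁ l₂ : G} (hl₁ : l₁ ∈ L) (hl₂ : l₂ ∈ L)
    (x : G) : doubleCoset (l₁ * x * l₂) L L = doubleCoset x L L :=
  doubleCoset_eq_of_mem (mem_doubleCoset.2 ⟨l₁, hl₁, l₂, hl₂, rfl⟩)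

theorem finite_doubleCosets_meeting_doubleCoset {H L : Subgroup G} [(L.subgroupOf H).FiniteIndex]
    (g : G) : {S : Set G | ∃ x ∈ doubleCoset g H H, S = doubleCoset x L L}.Finite := by
  refine (Set.finite_range fun p : (H ⧸ L.subgroupOf H) × (H ⧸ L.subgroupOf H) =>
    doubleCoset (((p.1.out : H) : G)⁻¹ * g * (p.2.out : H)) L L).subset ?_
  rintro _ ⟨_, hx, rfl⟩
  obtain ⟨a, ha, b, hb, rfl⟩ := mem_doubleCoset.1 hx
  obtain ⟨l₁, hl₁⟩ := QuotientGroup.mk_out_eq_mul (L.subgroupOf H) (⟨a, ha⟩ : H)⁻¹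
  obtain ⟨l₂, hl₂⟩ := QuotientGroup.mk_out_eq_mul (L.subgroupOf H) (⟨b, hb⟩ : H)
  refine ⟨(QuotientGroup.mk (⟨a, ha⟩ : H)⁻¹, QuotientGroup.mk ⟨b, hb⟩), ?_⟩
  have hrs : ((((⟨a, ha⟩ : H)⁻¹ * l₁ : H) : G))⁻¹ * g * ((⟨b, hb⟩ * l₂ : H) : G) =
      ((l₁ : H) : G)⁻¹ * (a * g * b) * (l₂ : H) := by
    push_cast
    group
  simp only [hl₁, hl₂, hrs]
  exact doubleCoset_mul_mul_of_mem (L.inv_mem (Subgroup.mem_subgroupOf.1 l₁.2))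
    (Subgroup.mem_subgroupOf.1 l₂.2) _

theorem FiniteBiIndex.of_finiteIndex_subgroupOf {H L : Subgroup G}
    [(L.subgroupOf H).FiniteIndex] (hH : FiniteBiIndex H) : FiniteBiIndex L := by
  have hcover : {S : Set G | ∃ x : G, S = doubleCoset x L L} ⊆
      ⋃ D ∈ {S : Set G | ∃ g : G, S = doubleCoset g H H},
        {S : Set G | ∃ x ∈ D, S = doubleCoset x L L} := by
    rintro _ ⟨x, rfl⟩
    exact Set.mem_biUnion ⟨x, rfl⟩ ⟨x, mem_doubleCoset_self H H x, rfl⟩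
  refine (hH.biUnion ?_).subset hcover
  rintro _ ⟨g, rfl⟩
  exact finite_doubleCosets_meeting_doubleCoset g

end

/-- If `H` has finite bi-index in `G` and `K` has finite index in `G`, then `H ⊓ K`
has finite bi-index in `K`. -/
theorem inter_finiteBiIndex {G : Type*} [Group G] (H K : Subgroup G)
    (hH : FiniteBiIndex H) (hK : K.index ≠ 0) :
    {S : Set G | ∃ g ∈ K,
      S = ((H ⊓ K : Subgroup G) : Set G) * {g} * ((H ⊓ K : Subgroup G) : Set G)}.Finite := by
  have : K.FiniteIndex := ⟨hK⟩
  have : ((H ⊓ K).subgroupOf H).FiniteIndex := by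
    rw [Subgroup.inf_subgroupOf_left]
    infer_instance
  exact (FiniteBiIndex.of_finiteIndex_subgroupOf hH).subset fun _ ⟨g, _, hS⟩ => ⟨g, hS⟩
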